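/- If (ψ, v, ρ) is a smooth solution of the governing system (E1)–(E3), then the vector (C¹, C², C³) = (ρ, (N²/g) ψ + ρ ψ_z, −ρ ψ_x) is a conserved vector: ∂_t(ρ) + ∂_x((N²/g) ψ + ρ ψ_z) + ∂_z(−ρ ψ_x) = 0 at every point. -/

import Mathlib

noncomputable section

/-- Partial derivative with respect to the first variable `t`. -/
def pt (u : ℝ → ℝ → ℝ → ℝ) : ℝ → ℝ → ℝ → ℝ := fun t x z => deriv (fun s => u s x z) t

/-- Partial derivative with respect to the second variable `x`. -/
def px (u : ℝ → ℝ → ℝ → ℝ) : ℝ → ℝ → ℝ → ℝ := fun t x z => deriv (fun s => u t s z) x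

/-- Partial derivative with respect to the third variable `z`. -/
def pz (u : ℝ → ℝ → ℝ → ℝ) : ℝ → ℝ → ℝ → ℝ := fun t x z => deriv (fun s => u t x s) z

/-- Two-dimensional Laplacian in `(x, z)`. -/
def lap (u : ℝ → ℝ → ℝ → ℝ) : ℝ → ℝ → ℝ → ℝ :=
  fun t x z => px (px u) t x z + pz (pz u) t x z

/-- Jacobian `J(a, b) = a_x b_z − a_z b_x`. -/
def jac (a b : ℝ → ℝ → ℝ → ℝ) : ℝ → ℝ → ℝ → ℝ :=
  fun t x z => px a t x z * pz b t x z - pz a t x z * px b t x z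

/-- Smoothness (`C^∞`) of a function of three real variables. -/
def Smooth3 (u : ℝ → ℝ → ℝ → ℝ) : Prop :=
  ContDiff ℝ (⊤ : ℕ∞) (fun p : ℝ × ℝ × ℝ => u p.1 p.2.1 p.2.2)

/-- The governing system (E1)–(E3) of two-dimensional stratified rotating fluids. -/
def SolvesSystem (g f N : ℝ) (ψ v ρ : ℝ → ℝ → ℝ → ℝ) : Prop :=
  (∀ t x z, pt (lap ψ) t x z - g * px ρ t x z - f * pz v t x z = jac ψ (lap ψ) t x z) ∧
  (∀ t x z, pt v t x z + f * pz ψ t x z = jac ψ v t x z) ∧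
  (∀ t x z, pt ρ t x z + (N ^ 2 / g) * px ψ t x z = jac ψ ρ t x z)

private def unc (u : ℝ → ℝ → ℝ → ℝ) : ℝ × ℝ × ℝ → ℝ := fun p => u p.1 p.2.1 p.2.2

private lemma line_x (t x z : ℝ) :
    HasDerivAt (fun s : ℝ => ((t, s, z) : ℝ × ℝ × ℝ)) (0, 1, 0) x :=
  HasDerivAt.prodMk (hasDerivAt_const x t) (HasDerivAt.prodMk (hasDerivAt_id x) (hasDerivAt_const x z))

private lemma line_z (t x z : ℝ) :
    HasDerivAt (fun s : ℝ => ((t, x, s) : ℝ × ℝ × ℝ)) (0, 0, 1) z :=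
  HasDerivAt.prodMk (hasDerivAt_const z t) (HasDerivAt.prodMk (hasDerivAt_const z x) (hasDerivAt_id z))

private lemma hasDeriv_px (u : ℝ → ℝ → ℝ → ℝ) (hu : Smooth3 u) (t x z : ℝ) :
    HasDerivAt (fun s => u t s z) (fderiv ℝ (unc u) (t, x, z) (0, 1, 0)) x := by
  have hF : HasFDerivAt (unc u) (fderiv ℝ (unc u) (t, x, z)) (t, x, z) :=
    ((hu.differentiable (by simp)) (t, x, z)).hasFDerivAt
  exact hF.comp_hasDerivAt x (line_x t x z)

private lemma hasDeriv_pz (u : ℝ → ℝ → ℝ → ℝ) (hu : Smooth3 u) (t x z : ℝ) :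
    HasDerivAt (fun s => u t x s) (fderiv ℝ (unc u) (t, x, z) (0, 0, 1)) z := by
  have hF : HasFDerivAt (unc u) (fderiv ℝ (unc u) (t, x, z)) (t, x, z) :=
    ((hu.differentiable (by simp)) (t, x, z)).hasFDerivAt
  exact hF.comp_hasDerivAt z (line_z t x z)

private lemma hx' (u : ℝ → ℝ → ℝ → ℝ) (hu : Smooth3 u) (t x z : ℝ) :
    HasDerivAt (fun s => u t s z) (px u t x z) x := by
  have h := hasDeriv_px u hu t x z
  have e : px u t x z = fderiv ℝ (unc u) (t, x, z) (0, 1, 0) := h.deriv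
  rw [e]; exact h

private lemma hz' (u : ℝ → ℝ → ℝ → ℝ) (hu : Smooth3 u) (t x z : ℝ) :
    HasDerivAt (fun s => u t x s) (pz u t x z) z := by
  have h := hasDeriv_pz u hu t x z
  have e : pz u t x z = fderiv ℝ (unc u) (t, x, z) (0, 0, 1) := h.deriv
  rw [e]; exact h

private lemma smooth_px (u : ℝ → ℝ → ℝ → ℝ) (hu : Smooth3 u) : Smooth3 (px u) := by
  have e : (fun p : ℝ × ℝ × ℝ => px u p.1 p.2.1 p.2.2)
      = fun p : ℝ × ℝ × ℝ => fderiv ℝ (unc u) p (0, 1, 0) := by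
    funext p
    exact (hasDeriv_px u hu p.1 p.2.1 p.2.2).deriv
  show ContDiff ℝ (⊤ : ℕ∞) _
  rw [e]
  exact (hu.fderiv_right (by simp)).clm_apply contDiff_const

private lemma smooth_pz (u : ℝ → ℝ → ℝ → ℝ) (hu : Smooth3 u) : Smooth3 (pz u) := by
  have e : (fun p : ℝ × ℝ × ℝ => pz u p.1 p.2.1 p.2.2)
      = fun p : ℝ × ℝ × ℝ => fderiv ℝ (unc u) p (0, 0, 1) := by
    funext p
    exact (hasDeriv_pz u hu p.1 p.2.1 p.2.2).deriv
  show ContDiff ℝ (⊤ : ℕ∞) _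
  rw [e]
  exact (hu.fderiv_right (by simp)).clm_apply contDiff_const

private lemma clairaut (u : ℝ → ℝ → ℝ → ℝ) (hu : Smooth3 u) (t x z : ℝ) :
    px (pz u) t x z = pz (px u) t x z := by
  set F := unc u with hF
  set p : ℝ × ℝ × ℝ := (t, x, z) with hp
  have hF' : ContDiff ℝ (⊤ : ℕ∞) (fderiv ℝ F) := hu.fderiv_right (by simp)
  have hder : ∀ q, HasFDerivAt F (fderiv ℝ F q) q := fun q =>
    ((hu.differentiable (by simp)) q).hasFDerivAt
  have h2 : HasFDerivAt (fderiv ℝ F) (fderiv ℝ (fderiv ℝ F) p) p :=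
    ((hF'.differentiable (by simp)) p).hasFDerivAt
  have hsym := second_derivative_symmetric hder h2 ((0, 1, 0) : ℝ × ℝ × ℝ) ((0, 0, 1) : ℝ × ℝ × ℝ)
  have hG3 : HasFDerivAt (fun q : ℝ × ℝ × ℝ => fderiv ℝ F q (0, 0, 1))
      ((fderiv ℝ (fderiv ℝ F) p).flip (0, 0, 1)) p := by
    simpa using h2.clm_apply (hasFDerivAt_const ((0, 0, 1) : ℝ × ℝ × ℝ) p)
  have hG2 : HasFDerivAt (fun q : ℝ × ℝ × ℝ => fderiv ℝ F q (0, 1, 0))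
      ((fderiv ℝ (fderiv ℝ F) p).flip (0, 1, 0)) p := by
    simpa using h2.clm_apply (hasFDerivAt_const ((0, 1, 0) : ℝ × ℝ × ℝ) p)
  have efun3 : (fun s => pz u t s z) = fun s => fderiv ℝ F (t, s, z) (0, 0, 1) := by
    funext s; exact (hasDeriv_pz u hu t s z).deriv
  have efun2 : (fun s => px u t x s) = fun s => fderiv ℝ F (t, x, s) (0, 1, 0) := by
    funext s; exact (hasDeriv_px u hu t x s).deriv
  have hpd1 : HasDerivAt (fun s => pz u t s z)
      (fderiv ℝ (fderiv ℝ F) p (0, 1, 0) (0, 0, 1)) x := by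
    rw [efun3]
    have h := hG3.comp_hasDerivAt x (line_x t x z)
    exact h
  have hpd2 : HasDerivAt (fun s => px u t x s)
      (fderiv ℝ (fderiv ℝ F) p (0, 0, 1) (0, 1, 0)) z := by
    rw [efun2]
    have h := hG2.comp_hasDerivAt z (line_z t x z)
    exact h
  have e1 : px (pz u) t x z = fderiv ℝ (fderiv ℝ F) p (0, 1, 0) (0, 0, 1) := hpd1.deriv
  have e2 : pz (px u) t x z = fderiv ℝ (fderiv ℝ F) p (0, 0, 1) (0, 1, 0) := hpd2.deriv
  rw [e1, e2, hsym]

/-- conserved vector (ρ, (N²/g) ψ + ρ ψ_z, −ρ ψ_x) from translation of ρ. -/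
theorem conserved_vector_translation_rho (g f N : ℝ) (hg : g ≠ 0) (hN : N ≠ 0)
    (ψ v ρ : ℝ → ℝ → ℝ → ℝ) (hψ : Smooth3 ψ) (hv : Smooth3 v) (hρ : Smooth3 ρ)
    (hsol : SolvesSystem g f N ψ v ρ) :
    ∀ t x z,
      pt ρ t x z
        + px (fun t x z => (N ^ 2 / g) * ψ t x z + ρ t x z * pz ψ t x z) t x z
        + pz (fun t x z => - (ρ t x z * px ψ t x z)) t x z = 0 := by
  intro t x z
  obtain ⟨h1, h2, h3⟩ := hsol
  have hpzψ : Smooth3 (pz ψ) := smooth_pz ψ hψ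
  have hpxψ : Smooth3 (px ψ) := smooth_px ψ hψ
  have hA : HasDerivAt (fun s => (N ^ 2 / g) * ψ t s z + ρ t s z * pz ψ t s z)
      ((N ^ 2 / g) * px ψ t x z + (px ρ t x z * pz ψ t x z + ρ t x z * px (pz ψ) t x z)) x :=
    ((hx' ψ hψ t x z).const_mul _).add ((hx' ρ hρ t x z).mul (hx' (pz ψ) hpzψ t x z))
  have hB : HasDerivAt (fun s => -(ρ t x s * px ψ t x s))
      (-(pz ρ t x z * px ψ t x z + ρ t x z * pz (px ψ) t x z)) z :=
    ((hz' ρ hρ t x z).mul (hz' (px ψ) hpxψ t x z)).neg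
  have eA : px (fun t x z => (N ^ 2 / g) * ψ t x z + ρ t x z * pz ψ t x z) t x z
      = (N ^ 2 / g) * px ψ t x z + (px ρ t x z * pz ψ t x z + ρ t x z * px (pz ψ) t x z) :=
    hA.deriv
  have eB : pz (fun t x z => - (ρ t x z * px ψ t x z)) t x z
      = -(pz ρ t x z * px ψ t x z + ρ t x z * pz (px ψ) t x z) := hB.deriv
  have e3 := h3 t x z
  have hcl : px (pz ψ) t x z = pz (px ψ) t x z := clairaut ψ hψ t x z
  simp only [jac] at e3
  rw [eA, eB, hcl]
  linarith
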